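/- Let T^N be the torus, φ : T^N → ℝ three times continuously differentiable and u : T^N → ℝ^N continuously differentiable. Then ∫_{T^N} (Δφ ∇φ)·u dx = − ∫_{T^N} (∇φ ⊗ ∇φ − (|∇φ|²/2)·I_N) : ∇u dx, where A : B = ∑_{ij} A_{ij} B_{ij}. -/

import Mathlib

open MeasureTheory

/-- Partial derivative in direction `j`. -/
noncomputable def pd {N : ℕ} (j : Fin N) (f : (Fin N → ℝ) → ℝ) (x : Fin N → ℝ) : ℝ :=
  fderiv ℝ f x (Pi.single j 1)

/-- Laplacian. -/
noncomputable def lap {N : ℕ} (f : (Fin N → ℝ) → ℝ) (x : Fin N → ℝ) : ℝ :=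
  ∑ j, pd j (pd j f) x

/-- Fundamental domain `[0,1]^N` of the torus `T^N = ℝ^N/ℤ^N`. -/
def Box (N : ℕ) : Set (Fin N → ℝ) := Set.univ.pi fun _ => Set.Icc (0:ℝ) 1

/-- `f` is `1`-periodic in each coordinate, i.e. a function on the torus `T^N`. -/
def ZPeriodic {N : ℕ} {E : Type*} (f : (Fin N → ℝ) → E) : Prop :=
  ∀ (x : Fin N → ℝ) (j : Fin N), f (x + Pi.single j 1) = f x

/-! The field `V_j = ∑_i T_ij u_i`, with `T_ij = ∂_iφ ∂_jφ - δ_ij |∇φ|²/2` the capillary stress, is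
`C¹` and `ℤ^N`-periodic, so by the divergence theorem on `[0,1]^N` (opposite faces cancel) its
divergence integrates to zero. By the product rule `div V = (div T)·u + T : ∇u`, and `div T = Δφ ∇φ`
pointwise: the symmetry of second derivatives makes `∑_j ∂_jφ ∂_i∂_jφ` cancel against
`∂_i(|∇φ|²/2)`. -/

variable {N : ℕ}

lemma contDiff_pd {n m : WithTop ℕ∞} (j : Fin N) {f : (Fin N → ℝ) → ℝ}
    (hf : ContDiff ℝ n f) (h : m + 1 ≤ n) : ContDiff ℝ m (pd j f) :=
  (hf.fderiv_right h).clm_apply contDiff_const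

lemma differentiable_pd {f : (Fin N → ℝ) → ℝ} (hf : ContDiff ℝ 2 f) (j : Fin N) :
    Differentiable ℝ (pd j f) :=
  (contDiff_pd (m := 1) j hf le_rfl).differentiable one_ne_zero

section Calculus

variable {f g : (Fin N → ℝ) → ℝ} {x : Fin N → ℝ} (j : Fin N)

lemma pd_mul (hf : DifferentiableAt ℝ f x) (hg : DifferentiableAt ℝ g x) :
    pd j (fun y => f y * g y) x = pd j f x * g x + f x * pd j g x := by
  simp only [pd, fderiv_fun_mul hf hg, add_apply, smul_apply, smul_eq_mul]
  ring

lemma pd_sub (hf : DifferentiableAt ℝ f x) (hg : DifferentiableAt ℝ g x) :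
    pd j (fun y => f y - g y) x = pd j f x - pd j g x := by
  simp only [pd, fderiv_fun_sub hf hg, sub_apply]

lemma pd_div_const (hf : DifferentiableAt ℝ f x) (c : ℝ) :
    pd j (fun y => f y / c) x = pd j f x / c := by
  simp only [pd, div_eq_mul_inv, fderiv_mul_const hf, smul_apply, smul_eq_mul]
  ring

lemma pd_sum {ι : Type*} (s : Finset ι) {F : ι → (Fin N → ℝ) → ℝ}
    (hF : ∀ i ∈ s, DifferentiableAt ℝ (F i) x) :
    pd j (fun y => ∑ i ∈ s, F i y) x = ∑ i ∈ s, pd j (F i) x := by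
  simp only [pd, fderiv_fun_sum hF, sum_apply]

lemma pd_sq (hf : DifferentiableAt ℝ f x) :
    pd j (fun y => f y ^ 2) x = 2 * (f x * pd j f x) := by
  simp only [sq]
  rw [pd_mul j hf hf]
  ring

end Calculus

lemma pd_comm {f : (Fin N → ℝ) → ℝ} (hf : ContDiff ℝ 2 f) (i j : Fin N) (x : Fin N → ℝ) :
    pd i (pd j f) x = pd j (pd i f) x := by
  have hd : DifferentiableAt ℝ (fderiv ℝ f) x :=
    (hf.fderiv_right (m := 1) le_rfl).differentiable one_ne_zero x
  have hsnd : ∀ v w : Fin N → ℝ,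
      fderiv ℝ (fun y => fderiv ℝ f y w) x v = fderiv ℝ (fderiv ℝ f) x v w := by
    intro v w
    simp [fderiv_clm_apply hd (differentiableAt_const w)]
  have hsymm := hf.contDiffAt.isSymmSndFDerivAt (x := x)
    (by simp [minSmoothness_of_isRCLikeNormedField])
  unfold pd
  rw [hsnd, hsnd, hsymm]

lemma continuous_pd {f : (Fin N → ℝ) → ℝ} (hf : ContDiff ℝ 1 f) (j : Fin N) :
    Continuous (pd j f) :=
  (contDiff_pd (m := 0) j hf le_rfl).continuous

lemma continuous_lap {f : (Fin N → ℝ) → ℝ} (hf : ContDiff ℝ 2 f) : Continuous (lap f) :=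
  continuous_finsetSum _ fun j _ => continuous_pd (contDiff_pd j hf le_rfl) j

lemma ZPeriodic.pd {f : (Fin N → ℝ) → ℝ} (hf : ZPeriodic f) (i : Fin N) :
    ZPeriodic (pd i f) := by
  intro x j
  have hshift : (fun y => f (y + Pi.single j 1)) = f := funext fun y => hf y j
  simp only [_root_.pd]
  rw [← fderiv_comp_add_right, hshift]

lemma Continuous.integrableOn_box {E : Type*} [NormedAddCommGroup E] {f : (Fin N → ℝ) → E}
    (hf : Continuous f) : IntegrableOn f (Box N) :=
  hf.continuousOn.integrableOn_compact (isCompact_univ_pi fun _ => isCompact_Icc)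

lemma insertNth_one_eq_insertNth_zero_add_single {n : ℕ} (i : Fin (n + 1)) (y : Fin n → ℝ) :
    (Fin.insertNth i 1 y : Fin (n + 1) → ℝ) = Fin.insertNth i 0 y + Pi.single i 1 := by
  funext k
  rcases eq_or_ne k i with rfl | hk
  · simp
  · obtain ⟨m, rfl⟩ := Fin.exists_succAbove_eq hk
    simp

theorem integral_box_divergence_eq_zero {V : Fin N → (Fin N → ℝ) → ℝ}
    (hV : ∀ j, ContDiff ℝ 1 (V j)) (hVp : ∀ j, ZPeriodic (V j)) :
    ∫ x in Box N, ∑ j, pd j (V j) x = 0 := by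
  cases N with
  | zero => simp
  | succ n =>
    have hdiv := integral_divergence_of_hasFDerivAt_off_countable' 0 1 zero_le_one V
      (fun j x => fderiv ℝ (V j) x) ∅ Set.countable_empty
      (fun j => (hV j).continuous.continuousOn)
      (fun x _ j => ((hV j).differentiable one_ne_zero x).hasFDerivAt)
      (Continuous.integrableOn_Icc <| continuous_finsetSum _ fun j _ =>
        ((hV j).continuous_fderiv one_ne_zero).clm_apply continuous_const)
    rw [Box, Set.pi_univ_Icc]
    refine hdiv.trans (Finset.sum_eq_zero fun j _ => ?_)
    simp [insertNth_one_eq_insertNth_zero_add_single, hVp _ _ j]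

section CapillaryStress

variable {φ : (Fin N → ℝ) → ℝ}

noncomputable def capillaryStress (φ : (Fin N → ℝ) → ℝ) (i j : Fin N) (x : Fin N → ℝ) : ℝ :=
  pd i φ x * pd j φ x - if i = j then (∑ k, pd k φ x ^ 2) / 2 else 0

lemma contDiff_capillaryStress (hφ : ContDiff ℝ 2 φ) (i j : Fin N) :
    ContDiff ℝ 1 (capillaryStress φ i j) := by
  have hpd : ∀ k, ContDiff ℝ 1 (pd k φ) := fun k => contDiff_pd k hφ le_rfl
  unfold capillaryStress
  split_ifs
  · exact ((hpd i).mul (hpd j)).sub ((ContDiff.sum fun k _ => (hpd k).pow 2).div_const 2)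
  · exact ((hpd i).mul (hpd j)).sub contDiff_const

lemma ZPeriodic.capillaryStress (hφ : ZPeriodic φ) (i j : Fin N) :
    ZPeriodic (capillaryStress φ i j) := by
  intro x m
  simp only [_root_.capillaryStress, fun k => hφ.pd k x m]

lemma pd_half_sum_sq_pd (hφ : ContDiff ℝ 2 φ) (i : Fin N) (x : Fin N → ℝ) :
    pd i (fun y => (∑ k, pd k φ y ^ 2) / 2) x = ∑ k, pd k φ x * pd i (pd k φ) x := by
  have hd := differentiable_pd hφ
  have hsum : Differentiable ℝ fun y => ∑ k, pd k φ y ^ 2 := by fun_prop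
  rw [pd_div_const i (hsum x),
    pd_sum i (F := fun k y => pd k φ y ^ 2) _ fun k _ => (hd k x).pow 2, Finset.sum_div]
  exact Finset.sum_congr rfl fun k _ => by rw [pd_sq i (hd k x)]; ring

lemma pd_capillaryStress (hφ : ContDiff ℝ 2 φ) (i j : Fin N) (x : Fin N → ℝ) :
    pd j (capillaryStress φ i j) x = pd j (pd i φ) x * pd j φ x + pd i φ x * pd j (pd j φ) x
      - if i = j then ∑ k, pd k φ x * pd i (pd k φ) x else 0 := by
  have hd := differentiable_pd hφ
  unfold capillaryStress
  by_cases hij : i = j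
  · subst hij
    have hE : Differentiable ℝ fun y => (∑ k, pd k φ y ^ 2) / 2 := by fun_prop
    simp only [if_true]
    rw [pd_sub i (f := fun y => pd i φ y * pd i φ y) ((hd i x).mul (hd i x)) (hE x),
      pd_mul i (hd i x) (hd i x), pd_half_sum_sq_pd hφ]
  · simp only [hij, if_false, sub_zero]
    exact pd_mul j (hd i x) (hd j x)

theorem sum_pd_capillaryStress (hφ : ContDiff ℝ 2 φ) (i : Fin N) (x : Fin N → ℝ) :
    ∑ j, pd j (capillaryStress φ i j) x = lap φ x * pd i φ x := by
  simp only [pd_capillaryStress hφ, pd_comm hφ _ i, Finset.sum_sub_distrib, Finset.sum_add_distrib,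
    Finset.sum_ite_eq, Finset.mem_univ, if_true, ← Finset.mul_sum, lap]
  simp_rw [mul_comm (pd i (pd _ φ) x)]
  ring

theorem sum_pd_capillaryStress_mul {u : (Fin N → ℝ) → Fin N → ℝ}
    (hφ : ContDiff ℝ 2 φ) (hu : Differentiable ℝ u) (x : Fin N → ℝ) :
    ∑ j, pd j (fun y => ∑ i, capillaryStress φ i j y * u y i) x
      = lap φ x * ∑ i, pd i φ x * u x i
        + ∑ i, ∑ j, capillaryStress φ i j x * pd j (fun y => u y i) x := by
  have hT i j : DifferentiableAt ℝ (capillaryStress φ i j) x :=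
    (contDiff_capillaryStress hφ i j).differentiable one_ne_zero x
  have hui i : DifferentiableAt ℝ (fun y => u y i) x := differentiable_pi.1 hu i x
  calc ∑ j, pd j (fun y => ∑ i, capillaryStress φ i j y * u y i) x
      = ∑ i, ∑ j, (pd j (capillaryStress φ i j) x * u x i
          + capillaryStress φ i j x * pd j (fun y => u y i) x) := by
        rw [Finset.sum_comm]
        refine Finset.sum_congr rfl fun j _ => ?_
        rw [pd_sum j (F := fun i y => capillaryStress φ i j y * u y i) _
          fun i _ => (hT i j).mul (hui i)]
        exact Finset.sum_congr rfl fun i _ => pd_mul j (hT i j) (hui i)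
    _ = lap φ x * ∑ i, pd i φ x * u x i
        + ∑ i, ∑ j, capillaryStress φ i j x * pd j (fun y => u y i) x := by
        simp only [Finset.sum_add_distrib, ← Finset.sum_mul, sum_pd_capillaryStress hφ,
          Finset.mul_sum, mul_assoc]

end CapillaryStress

/-- Capillary stress identity on the torus:
`∫ (Δφ∇φ)·u = −∫ (∇φ⊗∇φ − (|∇φ|²/2)I) : ∇u`. -/
theorem capillary_stress_identity (N : ℕ) (φ : (Fin N → ℝ) → ℝ)
    (u : (Fin N → ℝ) → (Fin N → ℝ))
    (hφ : ContDiff ℝ 3 φ) (hu : ContDiff ℝ 1 u)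
    (hφp : ZPeriodic φ) (hup : ZPeriodic u) :
    (∫ x in Box N, lap φ x * (∑ i, pd i φ x * u x i))
      = -∫ x in Box N, ∑ i, ∑ j,
          (pd i φ x * pd j φ x - (if i = j then (∑ k, (pd k φ x) ^ 2) / 2 else 0))
            * pd j (fun y => u y i) x := by
  have hφ2 : ContDiff ℝ 2 φ := hφ.of_le (by norm_num)
  have hT := contDiff_capillaryStress hφ2
  have hui : ∀ i, ContDiff ℝ 1 fun y => u y i := contDiff_pi.1 hu
  have hdiv := integral_box_divergence_eq_zero
    (V := fun j y => ∑ i, capillaryStress φ i j y * u y i)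
    (fun j => ContDiff.sum fun i _ => (hT i j).mul (hui i))
    (fun j x m => by simp only [hφp.capillaryStress _ j x m, hup x m])
  simp only [sum_pd_capillaryStress_mul hφ2 (hu.differentiable one_ne_zero)] at hdiv
  have hlap := continuous_lap hφ2
  have hpdφ := continuous_pd (hφ2.of_le one_le_two)
  have hpdu i j := continuous_pd (hui i) j
  have hTc i j := (hT i j).continuous
  have hcu := hu.continuous
  rw [integral_add (Continuous.integrableOn_box (by fun_prop))
    (Continuous.integrableOn_box (by fun_prop))] at hdiv
  exact eq_neg_of_add_eq_zero_left hdiv
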